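/- Let f : ℕ → ℝ≥0, n ≥ 1, and ω = e^{iπ/n}, and let M_f be the n × n lower triangular Toeplitz matrix with M_f[i,j] = f(i-j) for i ≥ j and 0 otherwise. Then γ₂(M_f) ≤ (1/(2n)) ∑_{k=0}^{2n-1} |m_f(ω^k)|, where m_f(x) = ∑_{k=0}^{n-1} f(k) x^k and γ₂(M) = inf { ‖B‖_{2→∞} ‖C‖_{1→2} : BC = M }. -/

import Mathlib

open Complex Finset
noncomputable def rowNorm {ι κ 𝕜 : Type*} [Fintype κ] [SeminormedAddCommGroup 𝕜]
    (B : Matrix ι κ 𝕜) : ℝ :=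
  ⨆ i, Real.sqrt (∑ j, ‖B i j‖ ^ 2)

noncomputable def colNorm {ι κ 𝕜 : Type*} [Fintype ι] [SeminormedAddCommGroup 𝕜]
    (C : Matrix ι κ 𝕜) : ℝ :=
  ⨆ j, Real.sqrt (∑ i, ‖C i j‖ ^ 2)

/-- The γ₂ factorization norm: infimum of `rowNorm B * colNorm C` over all
complex factorizations `M = B * C`. -/
noncomputable def gamma2 {n : ℕ} (M : Matrix (Fin n) (Fin n) ℂ) : ℝ :=
  sInf {r : ℝ | ∃ m : ℕ, ∃ B : Matrix (Fin n) (Fin m) ℂ, ∃ C : Matrix (Fin m) (Fin n) ℂ,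
    B * C = M ∧ r = rowNorm B * colNorm C}

lemma geom_aux {N : ℕ} (z : ℂ) (hz : z ^ N = 1) :
    ∑ k ∈ Finset.range N, z ^ k = if z = 1 then (N : ℂ) else 0 := by
  split_ifs with h
  · simp [h]
  · rw [geom_sum_eq h, hz, sub_self, zero_div]

theorem stmt_10 (n : ℕ) (hn : 1 ≤ n) (ω : ℂ)
    (hω : ω = Complex.exp (Real.pi * Complex.I / n))
    (f : ℕ → ℝ) (hf : ∀ k, 0 ≤ f k)
    (Mf : Matrix (Fin n) (Fin n) ℂ)
    (hM : ∀ i j : Fin n, Mf i j = if j ≤ i then (f ((i : ℕ) - j) : ℂ) else 0) :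
    gamma2 Mf ≤
      (1 / (2 * n : ℝ)) * ∑ k ∈ Finset.range (2 * n),
        ‖∑ j ∈ Finset.range n, (f j : ℂ) * (ω ^ k) ^ j‖ := by
  have hnC : (n : ℂ) ≠ 0 := Nat.cast_ne_zero.mpr (by omega)
  have h2n : 2 * n ≠ 0 := by omega
  have h2nR : (0:ℝ) < 2 * n := by
    have : (0:ℝ) < n := by exact_mod_cast Nat.pos_of_ne_zero (by omega)
    linarith
  have h2nC : ((2 * n : ℕ) : ℂ) ≠ 0 := Nat.cast_ne_zero.mpr h2n
  haveI : Nonempty (Fin n) := ⟨⟨0, hn⟩⟩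
  -- ω is a primitive 2n-th root of unity
  have hprim : IsPrimitiveRoot ω (2 * n) := by
    have h := Complex.isPrimitiveRoot_exp (2 * n) h2n
    have heq : Complex.exp (2 * Real.pi * Complex.I / ((2 * n : ℕ) : ℂ)) = ω := by
      rw [hω]
      congr 1
      push_cast
      field_simp
    rwa [heq] at h
  have hωpow : ω ^ (2 * n) = 1 := hprim.pow_eq_one
  have hωne : ω ≠ 0 := by rw [hω]; exact Complex.exp_ne_zero _
  have hωabs : ‖ω‖ = 1 := by
    rw [hω, Complex.norm_exp]
    have : ((Real.pi : ℂ) * Complex.I / (n : ℂ)) = ((Real.pi / n : ℝ) : ℂ) * Complex.I := by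
      push_cast; ring
    rw [this]
    simp [Complex.mul_I_re]
  set m : ℕ → ℂ := fun k => ∑ j ∈ Finset.range n, (f j : ℂ) * (ω ^ k) ^ j with hm
  set S : ℝ := ∑ k ∈ Finset.range (2 * n), ‖m k‖ with hS
  have hSnn : 0 ≤ S := Finset.sum_nonneg fun _ _ => norm_nonneg _
  -- the factorization
  set c : ℕ → ℝ := fun k => Real.sqrt (‖m k‖ / (2 * n)) with hc
  set phase : ℕ → ℂ := fun k => if m k = 0 then 1 else m k / ‖m k‖ with hphase
  set a : ℕ → ℂ := fun k => (c k : ℂ) * phase k with ha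
  set b : ℕ → ℂ := fun k => (c k : ℂ) with hb
  have hcnn : ∀ k, 0 ≤ ‖m k‖ / (2 * n) := fun k =>
    div_nonneg (norm_nonneg _) (le_of_lt h2nR)
  have hphase1 : ∀ k, ‖phase k‖ = 1 := by
    intro k
    simp only [hphase]
    split_ifs with h
    · simp
    · rw [norm_div, Complex.norm_real, Real.norm_eq_abs, _root_.abs_of_nonneg (norm_nonneg _),
        div_self (norm_ne_zero_iff.mpr h)]
  have hab : ∀ k, a k * b k = m k / ((2 * n : ℕ) : ℂ) := by
    intro k
    simp only [ha, hb, hc, hphase]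
    split_ifs with h
    · simp [h]
    · rw [mul_comm ((Real.sqrt _ : ℝ) : ℂ), mul_assoc, ← Complex.ofReal_mul,
        Real.mul_self_sqrt (hcnn k)]
      have habs : (‖m k‖ : ℂ) ≠ 0 := by
        simpa using norm_ne_zero_iff.mpr h
      push_cast
      field_simp
  set B : Matrix (Fin n) (Fin (2 * n)) ℂ := fun i k => a k * (ω⁻¹) ^ ((k : ℕ) * (i : ℕ)) with hB
  set C : Matrix (Fin (2 * n)) (Fin n) ℂ := fun k j => b k * ω ^ ((k : ℕ) * (j : ℕ)) with hC
  -- the key entry computation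
  have entry : ∀ i j : Fin n,
      ∑ k ∈ Finset.range (2 * n), m k * ((ω⁻¹) ^ (k * (i : ℕ)) * ω ^ (k * (j : ℕ)))
        = if (j : ℕ) ≤ (i : ℕ) then ((2 * n : ℕ) : ℂ) * (f ((i : ℕ) - (j : ℕ)) : ℂ) else 0 := by
    intro i j
    have step1 : ∀ k, m k * ((ω⁻¹) ^ (k * (i : ℕ)) * ω ^ (k * (j : ℕ)))
        = ∑ t ∈ Finset.range n, (f t : ℂ) * (ω ^ (t + (j : ℕ)) * (ω⁻¹) ^ (i : ℕ)) ^ k := by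
      intro k
      rw [hm]
      simp only
      rw [Finset.sum_mul]
      refine Finset.sum_congr rfl fun t _ => ?_
      ring
    rw [Finset.sum_congr rfl fun k _ => step1 k, Finset.sum_comm]
    have step2 : ∀ t, t < n →
        ∑ k ∈ Finset.range (2 * n), (f t : ℂ) * (ω ^ (t + (j : ℕ)) * (ω⁻¹) ^ (i : ℕ)) ^ k
          = if t + (j : ℕ) = (i : ℕ) then (f t : ℂ) * ((2 * n : ℕ) : ℂ) else 0 := by
      intro t ht
      rw [← Finset.mul_sum]
      have h1 : (ω ^ (t + (j : ℕ))) ^ (2 * n) = 1 := by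
        rw [← pow_mul, mul_comm, pow_mul, hωpow, one_pow]
      have h2 : ((ω⁻¹) ^ (i : ℕ)) ^ (2 * n) = 1 := by
        rw [← pow_mul, mul_comm, pow_mul, inv_pow, hωpow, inv_one, one_pow]
      have hz : (ω ^ (t + (j : ℕ)) * (ω⁻¹) ^ (i : ℕ)) ^ (2 * n) = 1 := by
        rw [mul_pow, h1, h2, one_mul]
      rw [geom_aux _ hz]
      have hiff : (ω ^ (t + (j : ℕ)) * (ω⁻¹) ^ (i : ℕ) = 1) ↔ t + (j : ℕ) = (i : ℕ) := by
        rw [inv_pow, mul_inv_eq_one₀ (pow_ne_zero _ hωne)]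
        constructor
        · intro h
          exact hprim.pow_inj (by have := j.isLt; omega) (by have := i.isLt; omega) h
        · intro h; rw [h]
      by_cases hcase : t + (j : ℕ) = (i : ℕ)
      · rw [if_pos (hiff.mpr hcase), if_pos hcase]
      · rw [if_neg (fun h => hcase (hiff.mp h)), if_neg hcase, mul_zero]
    rw [Finset.sum_congr rfl fun t ht => step2 t (Finset.mem_range.mp ht)]
    by_cases hij : (j : ℕ) ≤ (i : ℕ)
    · rw [if_pos hij]
      rw [Finset.sum_eq_single_of_mem ((i : ℕ) - (j : ℕ))
        (Finset.mem_range.mpr (by have := i.isLt; omega))]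
      · rw [if_pos (by omega)]; ring
      · intro t _ hne
        rw [if_neg (by omega)]
    · rw [if_neg hij]
      exact Finset.sum_eq_zero fun t _ => if_neg (by omega)
  -- factorization identity
  have hBC : B * C = Mf := by
    ext i j
    rw [Matrix.mul_apply, hM]
    have hterm : ∀ k : Fin (2 * n), B i k * C k j
        = ((2 * n : ℕ) : ℂ)⁻¹ *
          (m (k : ℕ) * ((ω⁻¹) ^ ((k : ℕ) * (i : ℕ)) * ω ^ ((k : ℕ) * (j : ℕ)))) := by
      intro k
      show a (k:ℕ) * (ω⁻¹) ^ ((k:ℕ) * (i:ℕ)) * (b (k:ℕ) * ω ^ ((k:ℕ) * (j:ℕ))) = _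
      rw [show a (k:ℕ) * (ω⁻¹) ^ ((k:ℕ) * (i:ℕ)) * (b (k:ℕ) * ω ^ ((k:ℕ) * (j:ℕ)))
          = (a (k:ℕ) * b (k:ℕ)) * ((ω⁻¹) ^ ((k:ℕ) * (i:ℕ)) * ω ^ ((k:ℕ) * (j:ℕ))) from by ring,
        hab]
      rw [div_mul_eq_mul_div, mul_comm, mul_div_assoc, div_eq_inv_mul, ← mul_assoc]
      ring
    rw [Finset.sum_congr rfl fun k _ => hterm k,
      Fin.sum_univ_eq_sum_range
        (fun k => ((2 * n : ℕ) : ℂ)⁻¹ * (m k * ((ω⁻¹) ^ (k * (i : ℕ)) * ω ^ (k * (j : ℕ)))))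
        (2 * n),
      ← Finset.mul_sum, entry i j]
    by_cases hij : (j : ℕ) ≤ (i : ℕ)
    · rw [if_pos hij, inv_mul_cancel_left₀ h2nC, if_pos (Fin.le_def.mpr hij)]
    · rw [if_neg hij, mul_zero, if_neg (fun h => hij (Fin.le_def.mp h))]
  -- norms
  have hωinvn : ‖ω⁻¹‖ = 1 := by
    rw [norm_inv, hωabs, inv_one]
  have hωn : ‖ω‖ = 1 := by rw [hωabs]
  have hanorm : ∀ k, ‖a k‖ = c k := by
    intro k
    rw [ha]
    simp only
    rw [norm_mul, hphase1, mul_one, Complex.norm_real,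
      Real.norm_eq_abs, _root_.abs_of_nonneg (Real.sqrt_nonneg _)]
  have hcsq : ∀ k, c k ^ 2 = ‖m k‖ / (2 * n) := fun k => Real.sq_sqrt (hcnn k)
  have hsumsq : ∑ k ∈ Finset.range (2 * n), ‖m k‖ / (2 * n) = S / (2 * n) := by
    rw [hS, Finset.sum_div]
  have hBrow : rowNorm B = Real.sqrt (S / (2 * n)) := by
    have hval : ∀ i : Fin n, Real.sqrt (∑ k : Fin (2*n), ‖B i k‖ ^ 2)
        = Real.sqrt (S / (2 * n)) := by
      intro i
      congr 1
      have : ∀ k : Fin (2*n), ‖B i k‖ ^ 2 = ‖m (k:ℕ)‖ / (2 * n) := by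
        intro k
        show ‖a (k:ℕ) * (ω⁻¹) ^ ((k:ℕ) * (i:ℕ))‖ ^ 2 = _
        rw [norm_mul, norm_pow, hωinvn, one_pow, mul_one, hanorm, hcsq]
      rw [Finset.sum_congr rfl fun k _ => this k]
      rw [Fin.sum_univ_eq_sum_range (fun k => ‖m k‖ / (2 * n)) (2 * n), hsumsq]
    calc rowNorm B = ⨆ i : Fin n, Real.sqrt (S / (2 * n)) := by
          unfold rowNorm
          exact iSup_congr hval
      _ = Real.sqrt (S / (2 * n)) := ciSup_const
  have hCcol : colNorm C = Real.sqrt (S / (2 * n)) := by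
    have hval : ∀ j : Fin n, Real.sqrt (∑ k : Fin (2*n), ‖C k j‖ ^ 2)
        = Real.sqrt (S / (2 * n)) := by
      intro j
      congr 1
      have : ∀ k : Fin (2*n), ‖C k j‖ ^ 2 = ‖m (k:ℕ)‖ / (2 * n) := by
        intro k
        show ‖b (k:ℕ) * ω ^ ((k:ℕ) * (j:ℕ))‖ ^ 2 = _
        rw [norm_mul, norm_pow, hωn, one_pow, mul_one, hb]
        simp only
        rw [Complex.norm_real, Real.norm_eq_abs, _root_.abs_of_nonneg (Real.sqrt_nonneg _), hcsq]
      rw [Finset.sum_congr rfl fun k _ => this k]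
      rw [Fin.sum_univ_eq_sum_range (fun k => ‖m k‖ / (2 * n)) (2 * n), hsumsq]
    calc colNorm C = ⨆ j : Fin n, Real.sqrt (S / (2 * n)) := by
          unfold colNorm
          exact iSup_congr hval
      _ = Real.sqrt (S / (2 * n)) := ciSup_const
  have hprod : rowNorm B * colNorm C = 1 / (2 * (n:ℝ)) * S := by
    rw [hBrow, hCcol, Real.mul_self_sqrt (div_nonneg hSnn h2nR.le)]
    field_simp
  have hbdd : BddBelow {r : ℝ | ∃ m' : ℕ, ∃ B' : Matrix (Fin n) (Fin m') ℂ,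
      ∃ C' : Matrix (Fin m') (Fin n) ℂ, B' * C' = Mf ∧ r = rowNorm B' * colNorm C'} := by
    refine ⟨0, ?_⟩
    rintro r ⟨m', B', C', -, rfl⟩
    exact mul_nonneg (Real.iSup_nonneg fun _ => Real.sqrt_nonneg _)
      (Real.iSup_nonneg fun _ => Real.sqrt_nonneg _)
  have hmem : (1 / (2 * (n:ℝ))) * S ∈ {r : ℝ | ∃ m' : ℕ, ∃ B' : Matrix (Fin n) (Fin m') ℂ,
      ∃ C' : Matrix (Fin m') (Fin n) ℂ, B' * C' = Mf ∧ r = rowNorm B' * colNorm C'} :=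
    ⟨2 * n, B, C, hBC, hprod.symm⟩
  exact csInf_le hbdd hmem
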